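/- Let f : [0,1] → [0,1] be defined by f(x) = √x. Then h_L^+(f) = h_L^-(f) = ∞; specifically, for every finite open cover U of [0,1] of diameter less than 1/10, δ_n(f,U) ≤ 2^{-2^{n-1}} for all n ≥ 1. -/

import Mathlib

open Set Filter Topology Metric
open scoped ENNReal

/-- `U` is an open cover of `X`: a family of open sets whose union is `X`. -/
def IsOpenCover {X : Type*} [MetricSpace X] (U : Set (Set X)) : Prop :=
  (∀ A ∈ U, IsOpen A) ∧ ⋃₀ U = Set.univ

/-- The Lebesgue number of a cover `U`: the largest `δ` such that every open
ball of radius `δ` is contained in some element of `U`. -/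
noncomputable def leb {X : Type*} [MetricSpace X] (U : Set (Set X)) : ℝ≥0∞ :=
  sSup {δ : ℝ≥0∞ | ∀ x : X, ∃ A ∈ U, EMetric.ball x δ ⊆ A}

/-- The cover `{g⁻¹(A) : A ∈ U}`. -/
def preCov {X : Type*} (g : X → X) (U : Set (Set X)) : Set (Set X) :=
  (fun A => g ⁻¹' A) '' U

/-- The join `U ∨ V = {A ∩ B : A ∈ U, B ∈ V}` of two covers. -/
def covJoin {X : Type*} (U V : Set (Set X)) : Set (Set X) :=
  {S | ∃ A ∈ U, ∃ B ∈ V, S = A ∩ B}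

/-- The cover `U_f^n = ⋁_{k=0}^{n-1} f^{-k}(U)`. -/
def covSeq {X : Type*} (f : X → X) (U : Set (Set X)) (n : ℕ) : Set (Set X) :=
  {S | ∃ g : Fin n → Set X, (∀ k, g k ∈ U) ∧ S = ⋂ k : Fin n, (f^[(k : ℕ)]) ⁻¹' g k}

/-- `δ_n(f,U)`, the Lebesgue number of `U_f^n`. -/
noncomputable def lebN {X : Type*} [MetricSpace X] (f : X → X) (U : Set (Set X)) (n : ℕ) : ℝ≥0∞ :=
  leb (covSeq f U n)

/-- `h_L^+(f,U) = limsup_n -(1/n) log δ_n(f,U)`. -/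
noncomputable def hLplus {X : Type*} [MetricSpace X] (f : X → X) (U : Set (Set X)) : EReal :=
  Filter.limsup (fun n : ℕ => ((-Real.log ((lebN f U n).toReal) / n : ℝ) : EReal)) atTop

/-- `h_L^-(f,U) = liminf_n -(1/n) log δ_n(f,U)`. -/
noncomputable def hLminus {X : Type*} [MetricSpace X] (f : X → X) (U : Set (Set X)) : EReal :=
  Filter.liminf (fun n : ℕ => ((-Real.log ((lebN f U n).toReal) / n : ℝ) : EReal)) atTop

/-- `h_L^+(f)`: supremum over finite open covers. -/
noncomputable def hLplusSup {X : Type*} [MetricSpace X] (f : X → X) : EReal :=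
  ⨆ (U : Set (Set X)) (_ : IsOpenCover U ∧ U.Finite), hLplus f U

/-- `h_L^-(f)`: supremum over finite open covers. -/
noncomputable def hLminusSup {X : Type*} [MetricSpace X] (f : X → X) : EReal :=
  ⨆ (U : Set (Set X)) (_ : IsOpenCover U ∧ U.Finite), hLminus f U

/-- The diameter of a cover: supremum of diameters of its elements. -/
noncomputable def covDiam {X : Type*} [MetricSpace X] (U : Set (Set X)) : ℝ≥0∞ :=
  ⨆ A ∈ U, EMetric.diam A

/-- `U` refines `V`: every element of `U` is contained in some element of `V`. -/
def Refines {X : Type*} (U V : Set (Set X)) : Prop :=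
  ∀ A ∈ U, ∃ B ∈ V, A ⊆ B

/-- `N(γ)`: the minimal number of open `γ`-balls needed to cover `X`. -/
noncomputable def covN (X : Type*) [MetricSpace X] (γ : ℝ≥0∞) : ℕ :=
  sInf {n : ℕ | ∃ s : Finset X, s.card = n ∧ ⋃ x ∈ s, EMetric.ball x γ = Set.univ}

/-- `S(U)`: the smallest cardinality of a subcover of `U`. -/
noncomputable def covS {X : Type*} [MetricSpace X] (U : Set (Set X)) : ℕ :=
  sInf {m : ℕ | ∃ W ⊆ U, ⋃₀ W = Set.univ ∧ W.ncard = m}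

/-- `s_n(f,ε)`: maximal cardinality of an `(n,ε)`-separated set. -/
noncomputable def sep {X : Type*} [MetricSpace X] (f : X → X) (n : ℕ) (ε : ℝ) : ℕ :=
  sSup {m : ℕ | ∃ E : Finset X, E.card = m ∧
    ∀ x ∈ E, ∀ y ∈ E, x ≠ y → ∃ k < n, ε < dist (f^[k] x) (f^[k] y)}

/-- Topological entropy via `(n,ε)`-separated sets. -/
noncomputable def topEnt {X : Type*} [MetricSpace X] (f : X → X) : EReal :=
  ⨆ (ε : ℝ) (_ : 0 < ε),
    Filter.limsup (fun n : ℕ => ((Real.log (sep f n ε) / n : ℝ) : EReal)) atTop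

/-- Upper box dimension of `X`. -/
noncomputable def dimB (X : Type*) [MetricSpace X] : EReal :=
  Filter.limsup
    (fun γ : ℝ => ((Real.log (covN X (ENNReal.ofReal γ)) / -Real.log γ : ℝ) : EReal))
    (nhdsWithin (0:ℝ) (Set.Ioi 0))
/-
The iterates of `√·` fix `0` and send `2^{-2^{n-1}}` to `1/2` at time `n - 1`, so for a cover `U`
of mesh below `1/2` these two points lie in no common element of `U_f^n`, and
`δ_n(f,U) ≤ 2^{-2^{n-1}}`. For a finite open cover of small mesh (which exists by compactness)
this makes `-(1/n) log δ_n(f,U)` grow like `2^n / n`, while `δ_n(f,U) > 0` by the Lebesgue number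
lemma; hence both `h_L^+` and `h_L^-` are infinite.
-/

section Lebesgue

variable {X : Type*} [MetricSpace X]

theorem leb_le_edist {U : Set (Set X)} {x y : X} (h : ∀ A ∈ U, x ∈ A → y ∉ A) :
    leb U ≤ edist x y := by
  refine sSup_le fun δ hδ => le_of_not_gt fun hlt => ?_
  obtain ⟨A, hA, hball⟩ := hδ x
  exact h A hA (hball (mem_eball_self (pos_of_gt hlt)))
    (hball (mem_eball'.2 hlt))

theorem lebN_le_edist_of_covDiam_lt {f : X → X} {U : Set (Set X)} {n k : ℕ} (hk : k < n)
    {x y : X} (h : covDiam U < edist (f^[k] x) (f^[k] y)) : lebN f U n ≤ edist x y := by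
  refine leb_le_edist ?_
  rintro _ ⟨g, hg, rfl⟩ hx hy
  have hxk : f^[k] x ∈ g ⟨k, hk⟩ := mem_iInter.1 hx ⟨k, hk⟩
  have hyk : f^[k] y ∈ g ⟨k, hk⟩ := mem_iInter.1 hy ⟨k, hk⟩
  have hdiam : edist (f^[k] x) (f^[k] y) ≤ covDiam U :=
    (edist_le_ediam_of_mem hxk hyk).trans
      (le_iSup₂ (f := fun A (_ : A ∈ U) => ediam A) (g ⟨k, hk⟩) (hg ⟨k, hk⟩))
  exact hdiam.not_gt h

theorem IsOpenCover.covSeq {f : X → X} (hf : Continuous f) {U : Set (Set X)}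
    (hU : IsOpenCover U) (n : ℕ) : IsOpenCover (covSeq f U n) := by
  refine ⟨?_, eq_univ_of_forall fun x => ?_⟩
  · rintro _ ⟨g, hg, rfl⟩
    exact isOpen_iInter_of_finite fun k => (hU.1 _ (hg k)).preimage (hf.iterate _)
  · have hmem (k : Fin n) : ∃ A ∈ U, f^[k] x ∈ A := mem_sUnion.1 (hU.2.ge (mem_univ _))
    choose g hgU hxg using hmem
    exact ⟨_, ⟨g, hgU, rfl⟩, mem_iInter.2 hxg⟩

theorem IsOpenCover.leb_pos [CompactSpace X] {U : Set (Set X)} (hU : IsOpenCover U) :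
    0 < leb U := by
  obtain ⟨δ, hδ, hball⟩ :=
    lebesgue_number_lemma_of_emetric_sUnion isCompact_univ hU.1 hU.2.ge
  exact hδ.trans_le (le_sSup fun x => hball x (mem_univ x))

theorem exists_isOpenCover_finite_covDiam_lt [CompactSpace X] {ε : ℝ} (hε : 0 < ε) :
    ∃ U : Set (Set X), IsOpenCover U ∧ U.Finite ∧ covDiam U < ENNReal.ofReal ε := by
  obtain ⟨s, -, hs, hcover⟩ :=
    finite_cover_balls_of_compact (isCompact_univ (X := X)) (div_pos hε three_pos)
  refine ⟨(ball · (ε / 3)) '' s, ⟨?_, ?_⟩, hs.image _, ?_⟩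
  · rintro _ ⟨x, -, rfl⟩
    exact isOpen_ball
  · rw [sUnion_image]
    exact univ_subset_iff.1 hcover
  · refine (iSup₂_le ?_).trans_lt ((ENNReal.ofReal_lt_ofReal_iff hε).2
      (by linarith : ε / 3 + ε / 3 < ε))
    rintro _ ⟨x, -, rfl⟩
    exact ediam_le_of_forall_dist_le fun a ha b hb =>
      (dist_triangle_right a b x).trans (add_le_add (mem_ball.1 ha).le (mem_ball.1 hb).le)

end Lebesgue

section Entropy

variable {X : Type*} [MetricSpace X] {f : X → X} {U : Set (Set X)}

theorem hLplusSup_eq_top_of_tendsto (hU : IsOpenCover U) (hfin : U.Finite)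
    (h : Tendsto (fun n : ℕ => -Real.log (lebN f U n).toReal / n) atTop atTop) :
    hLplusSup f = ⊤ := by
  have htop : hLplus f U = ⊤ := (EReal.tendsto_coe_nhds_top_iff.2 h).limsup_eq
  exact top_le_iff.1 <| htop ▸
    le_iSup₂ (f := fun U (_ : IsOpenCover U ∧ U.Finite) => hLplus f U) U ⟨hU, hfin⟩

theorem hLminusSup_eq_top_of_tendsto (hU : IsOpenCover U) (hfin : U.Finite)
    (h : Tendsto (fun n : ℕ => -Real.log (lebN f U n).toReal / n) atTop atTop) :
    hLminusSup f = ⊤ := by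
  have htop : hLminus f U = ⊤ := (EReal.tendsto_coe_nhds_top_iff.2 h).liminf_eq
  exact top_le_iff.1 <| htop ▸
    le_iSup₂ (f := fun U (_ : IsOpenCover U ∧ U.Finite) => hLminus f U) U ⟨hU, hfin⟩

end Entropy

theorem tendsto_two_pow_div_atTop : Tendsto (fun n : ℕ => (2 : ℝ) ^ n / n) atTop atTop := by
  have h := tendsto_pow_const_div_const_pow_of_one_lt 1 one_lt_two
  simp only [pow_one] at h
  have hpos : ∀ᶠ n : ℕ in atTop, (n : ℝ) / 2 ^ n ∈ Ioi 0 :=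
    (eventually_ge_atTop 1).mono fun n hn => by simp only [mem_Ioi]; positivity
  exact (tendsto_nhdsWithin_iff.2 ⟨h, hpos⟩).inv_tendsto_nhdsGT_zero.congr
    fun n => inv_div _ _

theorem tendsto_neg_log_div_of_le_inv_two_pow_two_pow {a : ℕ → ℝ}
    (hpos : ∀ n, 1 ≤ n → 0 < a n)
    (hle : ∀ n, 1 ≤ n → a n ≤ ((2 : ℝ) ^ (2 ^ (n - 1) : ℕ))⁻¹) :
    Tendsto (fun n : ℕ => -Real.log (a n) / n) atTop atTop := by
  refine tendsto_atTop_mono' atTop ?_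
    (tendsto_two_pow_div_atTop.const_mul_atTop (half_pos (Real.log_pos one_lt_two)))
  filter_upwards [eventually_ge_atTop 1] with n hn
  have hlog : (2 : ℝ) ^ n * (Real.log 2 / 2) ≤ -Real.log (a n) := by
    calc (2 : ℝ) ^ n * (Real.log 2 / 2) = -Real.log ((2 : ℝ) ^ (2 ^ (n - 1) : ℕ))⁻¹ := by
          rw [Real.log_inv, Real.log_pow, neg_neg, ← Nat.sub_add_cancel hn]
          push_cast
          ring
      _ ≤ -Real.log (a n) := neg_le_neg (Real.log_le_log (hpos n hn) (hle n hn))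
  rw [mul_div_assoc', le_div_iff₀ (by positivity), div_mul_cancel₀ _ (by positivity)]
  linarith

theorem Real.sqrt_iterate_pow_two_pow {a : ℝ} (ha : 0 ≤ a) (k : ℕ) :
    Real.sqrt^[k] (a ^ 2 ^ k) = a := by
  induction k with
  | zero => simp
  | succ k ih =>
    rw [Function.iterate_succ_apply, pow_succ, pow_mul, Real.sqrt_sq (by positivity), ih]

section Sqrt

variable {f : Icc (0 : ℝ) 1 → Icc (0 : ℝ) 1}

theorem continuous_of_coe_eq_sqrt (hf : ∀ x : Icc (0 : ℝ) 1, (f x : ℝ) = √x) :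
    Continuous f := by
  rw [continuous_induced_rng, show ((↑) ∘ f) = fun x : Icc (0 : ℝ) 1 => √x from funext hf]
  fun_prop

theorem coe_iterate_of_coe_eq_sqrt (hf : ∀ x : Icc (0 : ℝ) 1, (f x : ℝ) = √x) (k : ℕ)
    (x : Icc (0 : ℝ) 1) : (f^[k] x : ℝ) = Real.sqrt^[k] x :=
  Function.Semiconj.iterate_right (f := Subtype.val) hf k x

theorem lebN_le_of_coe_eq_sqrt (hf : ∀ x : Icc (0 : ℝ) 1, (f x : ℝ) = √x)
    {U : Set (Set (Icc (0 : ℝ) 1))} (hU : covDiam U < ENNReal.ofReal (1 / 2)) {n : ℕ}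
    (hn : 1 ≤ n) : lebN f U n ≤ ENNReal.ofReal ((2 : ℝ) ^ (2 ^ (n - 1) : ℕ))⁻¹ := by
  set t : ℝ := ((2 : ℝ) ^ (2 ^ (n - 1) : ℕ))⁻¹
  have ht : t ∈ Icc (0 : ℝ) 1 :=
    ⟨by positivity, inv_le_one_of_one_le₀ (one_le_pow₀ one_le_two)⟩
  have hedist (p q : Icc (0 : ℝ) 1) : edist p q = ENNReal.ofReal |(p : ℝ) - q| := by
    rw [edist_dist, Subtype.dist_eq, Real.dist_eq]
  have hhalf : (f^[n - 1] ⟨t, ht⟩ : ℝ) = 1 / 2 := by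
    rw [coe_iterate_of_coe_eq_sqrt hf,
      ← Real.sqrt_iterate_pow_two_pow (by norm_num : (0 : ℝ) ≤ 1 / 2) (n - 1)]
    simp [t]
  have hzero : (f^[n - 1] 0 : ℝ) = 0 := by
    rw [coe_iterate_of_coe_eq_sqrt hf, Set.Icc.coe_zero, Function.iterate_fixed Real.sqrt_zero]
  have hfar : covDiam U < edist (f^[n - 1] ⟨t, ht⟩) (f^[n - 1] 0) := by
    rwa [hedist, hhalf, hzero, sub_zero, abs_of_pos one_half_pos]
  calc lebN f U n ≤ edist ⟨t, ht⟩ 0 :=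
        lebN_le_edist_of_covDiam_lt (Nat.sub_lt hn one_pos) hfar
    _ = ENNReal.ofReal t := by rw [hedist, Set.Icc.coe_zero, sub_zero, abs_of_nonneg ht.1]

end Sqrt

/-- For `f(x) = √x` on `[0,1]`: `h_L^+(f) = h_L^-(f) = ∞`, and for every finite open
cover `U` of diameter `< 1/10`, `δ_n(f,U) ≤ 2^{-2^{n-1}}` for all `n ≥ 1`. -/
theorem hL_sqrt_eq_top (f : Set.Icc (0:ℝ) 1 → Set.Icc (0:ℝ) 1)
    (hf : ∀ x : Set.Icc (0:ℝ) 1, (f x : ℝ) = Real.sqrt x) :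
    hLplusSup f = ⊤ ∧ hLminusSup f = ⊤ ∧
    ∀ U : Set (Set (Set.Icc (0:ℝ) 1)), IsOpenCover U → U.Finite →
      covDiam U < ENNReal.ofReal (1/10) →
      ∀ n : ℕ, 1 ≤ n →
        lebN f U n ≤ ENNReal.ofReal (((2:ℝ) ^ (2 ^ (n - 1) : ℕ))⁻¹) := by
  have hbound (U : Set (Set (Icc (0 : ℝ) 1))) (hU : covDiam U < ENNReal.ofReal (1 / 10))
      (n : ℕ) (hn : 1 ≤ n) :
      lebN f U n ≤ ENNReal.ofReal ((2 : ℝ) ^ (2 ^ (n - 1) : ℕ))⁻¹ :=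
    lebN_le_of_coe_eq_sqrt hf (hU.trans ((ENNReal.ofReal_lt_ofReal_iff one_half_pos).2
      (by norm_num))) hn
  obtain ⟨U, hU, hfin, hdiam⟩ :=
    exists_isOpenCover_finite_covDiam_lt (X := Icc (0 : ℝ) 1) (by norm_num : (0 : ℝ) < 1 / 10)
  have hgrowth : Tendsto (fun n : ℕ => -Real.log (lebN f U n).toReal / n) atTop atTop := by
    refine tendsto_neg_log_div_of_le_inv_two_pow_two_pow (fun n hn => ?_)
      (fun n hn => ENNReal.toReal_le_of_le_ofReal (by positivity) (hbound U hdiam n hn))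
    exact ENNReal.toReal_pos (hU.covSeq (continuous_of_coe_eq_sqrt hf) n).leb_pos.ne'
      (ne_top_of_le_ne_top ENNReal.ofReal_ne_top (hbound U hdiam n hn))
  exact ⟨hLplusSup_eq_top_of_tendsto hU hfin hgrowth,
    hLminusSup_eq_top_of_tendsto hU hfin hgrowth, fun U _ _ hU n hn => hbound U hU n hn⟩
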